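/- For every θ ∈ (0,π) and every k > 0, the Hilbert–Schmidt norm of T̂_θ(k) satisfies ‖T̂_θ(k)‖_HS² = ∫_ℝ ∫_ℝ T̂_θ(p,q;k)² dp dq = 1/(2π sin(θ) k²). -/

import Mathlib

/-!
Completing the square, `p² − 2pq cos θ + q² = (q − p cos θ)² + p² sin² θ`, turns the kernel into the
Lorentzian `(sin θ / π) / ((q − p cos θ)² + a²)` in `q`, with `a² = sin² θ (p² + 2k²)`. Its square
integrates in `q` to `π / (2a³)` after a translation, which leaves
`(2π sin θ)⁻¹ ∫ (p² + 2k²)^(-3/2) dp = (2π sin θ)⁻¹ / k²` for Tonelli's outer integral. Both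
one-dimensional integrals are read off from explicit odd antiderivatives.
-/

open MeasureTheory Real

noncomputable section

/-- The kernel of the integral operator `T̂_θ(k)` at energy `−k²`:
`T̂_θ(p,q;k) = (1/(2π sin θ)) · ((p² − 2 cos(θ)·p·q + q²)/(2 sin²(θ)) + k²)⁻¹`. -/
def TkerE (θ k p q : ℝ) : ℝ :=
  (1 / (2 * Real.pi * Real.sin θ)) *
    ((p ^ 2 - 2 * Real.cos θ * p * q + q ^ 2) / (2 * Real.sin θ ^ 2) + k ^ 2)⁻¹

open Filter Set Topology

theorem integrable_of_hasDerivAt_of_nonneg {F f : ℝ → ℝ} {m n : ℝ}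
    (hF : ∀ x, HasDerivAt F (f x) x) (hf : ∀ x, 0 ≤ f x)
    (hbot : Tendsto F atBot (𝓝 m)) (htop : Tendsto F atTop (𝓝 n)) : Integrable f := by
  have hIoi : IntegrableOn f (Ioi 0) :=
    integrableOn_Ioi_deriv_of_nonneg' (fun x _ => hF x) (fun x _ => hf x) htop
  have hIio : IntegrableOn f (Iio 0) := by
    have hrefl : IntegrableOn (fun x => f (-x)) (Ioi 0) := by
      refine integrableOn_Ioi_deriv_of_nonneg' (g := fun x => -F (-x)) (fun x _ => ?_)
        (fun x _ => hf (-x)) (hbot.comp tendsto_neg_atTop_atBot).neg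
      simpa [Function.comp_def, Pi.neg_def] using ((hF (-x)).comp x (hasDerivAt_neg x)).neg
    rw [← (Measure.measurePreserving_neg (volume : Measure ℝ)).integrableOn_comp_preimage
      (Homeomorph.neg ℝ).measurableEmbedding]
    simpa [Function.comp_def] using hrefl
  rw [← integrableOn_univ, ← Iio_union_Ici (a := (0 : ℝ)), integrableOn_union,
    integrableOn_Ici_iff_integrableOn_Ioi]
  exact ⟨hIio, hIoi⟩

theorem Filter.Tendsto.atBot_of_odd {F : ℝ → ℝ} {l : ℝ} (hodd : ∀ x, F (-x) = -F x)
    (htop : Tendsto F atTop (𝓝 l)) : Tendsto F atBot (𝓝 (-l)) := by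
  simpa [Function.comp_def, hodd] using htop.neg.comp tendsto_neg_atBot_atTop

theorem integrable_and_integral_eq_of_hasDerivAt_of_odd {F f : ℝ → ℝ} {l : ℝ}
    (hF : ∀ x, HasDerivAt F (f x) x) (hf : ∀ x, 0 ≤ f x) (hodd : ∀ x, F (-x) = -F x)
    (htop : Tendsto F atTop (𝓝 l)) : Integrable f ∧ ∫ x, f x = 2 * l := by
  have hbot := htop.atBot_of_odd hodd
  have hint := integrable_of_hasDerivAt_of_nonneg hF hf hbot htop
  exact ⟨hint, by rw [integral_of_hasDerivAt_of_tendsto hF hint hbot htop]; ring⟩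

theorem integrable_and_integral_inv_sq_add_sq_sq {a : ℝ} (ha : 0 < a) :
    Integrable (fun u : ℝ => ((u ^ 2 + a ^ 2) ^ 2)⁻¹) ∧
      ∫ u, ((u ^ 2 + a ^ 2) ^ 2)⁻¹ = π / (2 * a ^ 3) := by
  set F : ℝ → ℝ := fun u => (u / (u ^ 2 + a ^ 2) + arctan (u / a) / a) / (2 * a ^ 2)
  have hF : ∀ u, HasDerivAt F ((u ^ 2 + a ^ 2) ^ 2)⁻¹ u := by
    intro u
    have hrat := (hasDerivAt_id' u).fun_div ((hasDerivAt_pow 2 u).add_const (a ^ 2))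
      (by positivity : u ^ 2 + a ^ 2 ≠ 0)
    have harctan := ((hasDerivAt_id' u).div_const a).arctan
    refine ((hrat.add (harctan.div_const a)).div_const (2 * a ^ 2)).congr_deriv ?_
    field_simp
    ring
  have hodd : ∀ u, F (-u) = -F u := by
    intro u
    simp only [F, neg_sq, neg_div, arctan_neg]
    ring
  have hrat : Tendsto (fun u : ℝ => u / (u ^ 2 + a ^ 2)) atTop (𝓝 0) := by
    have hφ : Continuous fun t : ℝ => t / (1 + a ^ 2 * t ^ 2) :=
      continuous_id.div (by fun_prop) fun t => by positivity
    refine ((hφ.tendsto 0).comp tendsto_inv_atTop_zero).congr' ?_ |>.trans (by simp)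
    filter_upwards [eventually_gt_atTop 0] with u hu
    simp only [Function.comp_apply]
    field_simp
  have htop : Tendsto F atTop (𝓝 (π / (4 * a ^ 3))) := by
    have harctan : Tendsto (fun u => arctan (u / a)) atTop (𝓝 (π / 2)) :=
      tendsto_nhds_of_tendsto_nhdsWithin tendsto_arctan_atTop |>.comp
        (tendsto_id.atTop_div_const ha)
    convert (hrat.add (harctan.div_const a)).div_const (2 * a ^ 2) using 2
    field_simp
    ring
  convert integrable_and_integral_eq_of_hasDerivAt_of_odd hF (fun u => by positivity) hodd htop
    using 2
  ring

theorem integrable_and_integral_inv_sq_add_mul_sqrt {c : ℝ} (hc : 0 < c) :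
    Integrable (fun q : ℝ => ((q ^ 2 + c) * √(q ^ 2 + c))⁻¹) ∧
      ∫ q, ((q ^ 2 + c) * √(q ^ 2 + c))⁻¹ = 2 / c := by
  set G : ℝ → ℝ := fun q => q / (c * √(q ^ 2 + c))
  have hG : ∀ q, HasDerivAt G ((q ^ 2 + c) * √(q ^ 2 + c))⁻¹ q := by
    intro q
    have hpos : 0 < q ^ 2 + c := by positivity
    have hsqrt := ((hasDerivAt_pow 2 q).add_const c).sqrt hpos.ne'
    refine ((hasDerivAt_id' q).fun_div (hsqrt.const_mul c) (by positivity)).congr_deriv ?_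
    have hsq : √(q ^ 2 + c) ^ 2 = q ^ 2 + c := sq_sqrt hpos.le
    field_simp
    linear_combination 2 * q ^ 2 * hsq
  have hodd : ∀ q, G (-q) = -G q := by
    intro q
    simp only [G, neg_sq, neg_div]
  have htop : Tendsto G atTop (𝓝 (1 / c)) := by
    have hφ : Continuous fun t : ℝ => (√(1 + c * t ^ 2))⁻¹ / c :=
      ((by fun_prop : Continuous fun t : ℝ => √(1 + c * t ^ 2)).inv₀
        fun t => (sqrt_pos.2 (by positivity)).ne').div_const c
    refine ((hφ.tendsto 0).comp tendsto_inv_atTop_zero).congr' ?_ |>.trans (by simp)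
    filter_upwards [eventually_gt_atTop 0] with q hq
    have hsplit : q ^ 2 + c = q ^ 2 * (1 + c * q⁻¹ ^ 2) := by field_simp
    simp only [Function.comp_apply, G]
    rw [hsplit, sqrt_mul (sq_nonneg q), sqrt_sq hq.le]
    field_simp
  convert integrable_and_integral_eq_of_hasDerivAt_of_odd hG (fun q => by positivity) hodd htop
    using 2
  ring

theorem integrable_prod_and_integral_prod_eq_of_nonneg {α β : Type*} [MeasurableSpace α]
    [MeasurableSpace β] {μ : Measure α} {ν : Measure β} [SFinite μ] [SFinite ν]
    {f : α × β → ℝ} {g : α → ℝ} (hf : AEStronglyMeasurable f (μ.prod ν)) (hf0 : ∀ z, 0 ≤ f z)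
    (hsec : ∀ᵐ x ∂μ, Integrable (fun y => f (x, y)) ν)
    (hinner : ∀ᵐ x ∂μ, ∫ y, f (x, y) ∂ν = g x) (hg : Integrable g μ) :
    Integrable f (μ.prod ν) ∧ ∫ z, f z ∂(μ.prod ν) = ∫ x, g x ∂μ := by
  have hnorm : ∀ᵐ x ∂μ, g x = ∫ y, ‖f (x, y)‖ ∂ν := hinner.mono fun x hx => by
    simp only [Real.norm_of_nonneg (hf0 _), hx]
  have hint : Integrable f (μ.prod ν) := (integrable_prod_iff hf).2 ⟨hsec, hg.congr hnorm⟩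
  exact ⟨hint, (integral_prod f hint).trans (integral_congr_ae hinner)⟩

theorem TkerE_eq (θ k p q : ℝ) :
    TkerE θ k p q =
      sin θ / π * ((q - cos θ * p) ^ 2 + sin θ ^ 2 * (p ^ 2 + 2 * k ^ 2))⁻¹ := by
  -- at `sin θ = 0` both sides are `0` because `x / 0 = 0`
  rcases eq_or_ne (sin θ) 0 with hs | hs
  · simp [TkerE, hs]
  have hD : (p ^ 2 - 2 * cos θ * p * q + q ^ 2) / (2 * sin θ ^ 2) + k ^ 2 =
      ((q - cos θ * p) ^ 2 + sin θ ^ 2 * (p ^ 2 + 2 * k ^ 2)) / (2 * sin θ ^ 2) := by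
    field_simp
    linear_combination -p ^ 2 * sin_sq_add_cos_sq θ
  rw [TkerE, hD, inv_div]
  field_simp

theorem integrable_and_integral_TkerE_sq_right {θ k : ℝ} (hs : 0 < sin θ) (hk : k ≠ 0)
    (p : ℝ) :
    Integrable (fun q => TkerE θ k p q ^ 2) ∧
      ∫ q, TkerE θ k p q ^ 2 =
        (2 * π * sin θ)⁻¹ * ((p ^ 2 + 2 * k ^ 2) * √(p ^ 2 + 2 * k ^ 2))⁻¹ := by
  have hr : 0 < p ^ 2 + 2 * k ^ 2 := by positivity
  set a := sin θ * √(p ^ 2 + 2 * k ^ 2)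
  have ha : 0 < a := mul_pos hs (sqrt_pos.2 hr)
  have hsq : √(p ^ 2 + 2 * k ^ 2) ^ 2 = p ^ 2 + 2 * k ^ 2 := sq_sqrt hr.le
  have ha2 : a ^ 2 = sin θ ^ 2 * (p ^ 2 + 2 * k ^ 2) := by rw [mul_pow, hsq]
  have ha3 : a ^ 3 = sin θ ^ 3 * ((p ^ 2 + 2 * k ^ 2) * √(p ^ 2 + 2 * k ^ 2)) := by
    rw [mul_pow]
    linear_combination sin θ ^ 3 * √(p ^ 2 + 2 * k ^ 2) * hsq
  have hT : (fun q => TkerE θ k p q ^ 2) =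
      fun q => (sin θ / π) ^ 2 * (((q - cos θ * p) ^ 2 + a ^ 2) ^ 2)⁻¹ := by
    funext q
    rw [TkerE_eq, ha2, mul_pow, inv_pow]
  obtain ⟨hint, hval⟩ := integrable_and_integral_inv_sq_add_sq_sq ha
  rw [hT, integral_const_mul, integral_sub_right_eq_self (fun u => ((u ^ 2 + a ^ 2) ^ 2)⁻¹),
    hval, ha3]
  refine ⟨(hint.comp_sub_right _).const_mul _, ?_⟩
  field_simp

/-- For every `θ ∈ (0,π)` and every `k > 0`, the Hilbert–Schmidt norm of `T̂_θ(k)` satisfies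
`‖T̂_θ(k)‖_HS² = ∫∫ T̂_θ(p,q;k)² dp dq = 1/(2π sin(θ) k²)`: the kernel is square integrable on
`ℝ²` and the integral of its square has that value. -/
theorem TkerE_HS_norm (θ : ℝ) (hθ : θ ∈ Set.Ioo 0 Real.pi) (k : ℝ) (hk : 0 < k) :
    Integrable (fun x : ℝ × ℝ => TkerE θ k x.1 x.2 ^ 2)
      (volume : Measure (ℝ × ℝ)) ∧
    ∫ x : ℝ × ℝ, TkerE θ k x.1 x.2 ^ 2 = 1 / (2 * Real.pi * Real.sin θ * k ^ 2) := by
  have hs : 0 < sin θ := sin_pos_of_pos_of_lt_pi hθ.1 hθ.2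
  have hsec := integrable_and_integral_TkerE_sq_right hs hk.ne'
  have hmeas : AEStronglyMeasurable (fun x : ℝ × ℝ => TkerE θ k x.1 x.2 ^ 2)
      (volume.prod volume) := by
    unfold TkerE
    fun_prop
  obtain ⟨hrad, hradInt⟩ :=
    integrable_and_integral_inv_sq_add_mul_sqrt (by positivity : 0 < 2 * k ^ 2)
  obtain ⟨hint, hval⟩ := integrable_prod_and_integral_prod_eq_of_nonneg hmeas
    (fun _ => sq_nonneg _) (.of_forall fun p => (hsec p).1) (.of_forall fun p => (hsec p).2)
    (hrad.const_mul _)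
  rw [Measure.volume_eq_prod]
  refine ⟨hint, hval.trans ?_⟩
  rw [integral_const_mul, hradInt]
  field_simp
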